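/- The degenerate r-Whitney numbers of the first kind satisfy the recurrence V_{m,λ}^{(r)}(n+1,k) = V_{m,λ}^{(r)}(n,k−1) + (kλ − r − mn) V_{m,λ}^{(r)}(n,k), for all n ≥ 0 and k ≥ 1 (with the convention V_{m,λ}^{(r)}(n,j) = 0 for j < 0 or j > n, and V_{m,λ}^{(r)}(0,0) = 1). -/

import Mathlib

open Finset

/-- generalized falling factorial: (x)_{n,λ} = x(x-λ)···(x-(n-1)λ) -/
def dff (lam x : ℝ) (n : ℕ) : ℝ := ∏ i ∈ Finset.range n, (x - i * lam)

/-- generalized rising factorial: ⟨x⟩_{n,λ} = x(x+λ)···(x+(n-1)λ) -/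
def drf (lam x : ℝ) (n : ℕ) : ℝ := ∏ i ∈ Finset.range n, (x + i * lam)

/-!
The polynomials `x ↦ (m x + r)_{k,λ}` have degree `k` (as `m ≠ 0`), so they form a basis and the
coefficients `V n k` are unique. Since `m (x - n) = (y - kλ) + (kλ - r - m n)` with `y = m x + r`,
and `(y)_{k,λ} (y - kλ) = (y)_{k+1,λ}`, multiplying the expansion of `m^n (x)_n` by `m (x - n)`
expands `m^{n+1} (x)_{n+1}` with coefficients `V n (k-1) + (kλ - r - m n) V n k`; comparing
coefficients gives the recurrence.
-/

theorem dff_succ (lam x : ℝ) (n : ℕ) : dff lam x (n + 1) = dff lam x n * (x - n * lam) :=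
  prod_range_succ _ _

def mulSubCoeff (lam c : ℝ) (a : ℕ → ℝ) : ℕ → ℝ
  | 0 => -c * a 0
  | k + 1 => a k + ((k + 1 : ℕ) * lam - c) * a (k + 1)

theorem sum_mul_dff_mul_sub (lam y c : ℝ) (a : ℕ → ℝ) {N : ℕ} (ha : a N = 0) :
    (∑ k ∈ range N, a k * dff lam y k) * (y - c) =
      ∑ k ∈ range (N + 1), mulSubCoeff lam c a k * dff lam y k := by
  calc (∑ k ∈ range N, a k * dff lam y k) * (y - c)
      = ∑ k ∈ range N, a k * dff lam y (k + 1) +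
          ∑ k ∈ range (N + 1), (k * lam - c) * a k * dff lam y k := by
        rw [sum_range_succ _ N, ha, mul_zero, zero_mul, add_zero, sum_mul, ← sum_add_distrib]
        exact sum_congr rfl fun k _ => by rw [dff_succ]; ring
    _ = ∑ k ∈ range (N + 1), mulSubCoeff lam c a k * dff lam y k := by
        rw [sum_range_succ' _ N, sum_range_succ' (fun k => mulSubCoeff lam c a k * dff lam y k),
          ← add_assoc, ← sum_add_distrib]
        simp only [mulSubCoeff]
        push_cast
        exact congrArg₂ _ (sum_congr rfl fun k _ => by ring) (by ring)

open Polynomial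

noncomputable def dffSequence {m : ℝ} (hm : m ≠ 0) (r lam : ℝ) : Polynomial.Sequence ℝ where
  elems' k := ∏ i ∈ range k, (C m * X + C (r - i * lam))
  degree_eq' k := by simp only [degree_prod, degree_linear hm, sum_const, card_range]; simp

theorem eval_dffSequence {m : ℝ} (hm : m ≠ 0) (r lam x : ℝ) (k : ℕ) :
    (dffSequence hm r lam k).eval x = dff lam (m * x + r) k := by
  simp only [dffSequence, eval_prod, dff]
  exact prod_congr rfl fun i _ => by rw [eval_add, eval_mul, eval_C, eval_X, eval_C]; ring

theorem eq_of_forall_sum_mul_dff_eq {m : ℝ} (hm : m ≠ 0) (r lam : ℝ) {N : ℕ} {c d : ℕ → ℝ}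
    (h : ∀ x, ∑ k ∈ range N, c k * dff lam (m * x + r) k =
      ∑ k ∈ range N, d k * dff lam (m * x + r) k)
    {k : ℕ} (hk : k < N) : c k = d k := by
  have hsum : ∑ i ∈ range N, (c - d) i • dffSequence hm r lam i = 0 := Polynomial.funext fun x => by
    simp [eval_finsetSum, eval_dffSequence, sub_mul, h x]
  exact sub_eq_zero.mp <|
    linearIndependent_iff'.mp (dffSequence hm r lam).linearIndependent _ _ hsum k (mem_range.mpr hk)

theorem stmt8_general (m : ℕ) (hm : 0 < m) (r : ℕ) (lam : ℝ) (V : ℕ → ℕ → ℝ)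
    (hV : ∀ n : ℕ, ∀ x : ℝ,
      (m : ℝ) ^ n * dff 1 x n = ∑ k ∈ range (n + 1), V n k * dff lam ((m : ℝ) * x + r) k)
    (hzero : ∀ n k : ℕ, n < k → V n k = 0) :
    ∀ n k : ℕ, 1 ≤ k →
      V (n + 1) k = V n (k - 1) + ((k : ℝ) * lam - r - m * n) * V n k := by
  intro n k hk
  obtain ⟨j, rfl⟩ : ∃ j, k = j + 1 := ⟨k - 1, by omega⟩
  rcases lt_or_ge j (n + 1) with hj | hj
  · have hexpand : ∀ x : ℝ, ∑ k ∈ range (n + 2), V (n + 1) k * dff lam (m * x + r) k =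
        ∑ k ∈ range (n + 2), mulSubCoeff lam (r + m * n) (V n) k * dff lam (m * x + r) k := by
      intro x
      rw [← hV, ← sum_mul_dff_mul_sub _ _ _ _ (hzero n (n + 1) n.lt_succ_self), ← hV, dff_succ]
      ring
    have hcoeff := eq_of_forall_sum_mul_dff_eq (Nat.cast_ne_zero.mpr hm.ne') _ _ hexpand
      (k := j + 1) (by omega)
    rw [hcoeff, mulSubCoeff, Nat.add_sub_cancel]
    ring
  · rw [hzero _ _ (by omega), hzero _ _ (by omega), hzero _ _ (by omega)]
    ring

theorem stmt8 (m : ℕ) (hm : 0 < m) (r : ℕ) (lam : ℝ) (V : ℕ → ℕ → ℝ)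
    (hV : ∀ n : ℕ, ∀ x : ℝ,
      (m : ℝ) ^ n * dff 1 x n = ∑ k ∈ range (n + 1), V n k * dff lam ((m : ℝ) * x + r) k)
    (hzero : ∀ n k : ℕ, n < k → V n k = 0)
    (hV00 : V 0 0 = 1) :
    ∀ n k : ℕ, 1 ≤ k →
      V (n + 1) k = V n (k - 1) + ((k : ℝ) * lam - r - m * n) * V n k :=
  stmt8_general m hm r lam V hV hzero
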